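/- Let w be a strict pin word with corresponding extended pin sequence (p₀, p₁, …, p_n). For every i ≥ 2, the numeral q(w_{i-1}, w_i) — defined as φ⁻¹(w_{i-1}w_i) if i ≥ 3, and as φ⁻¹(BC) where φ(w₁w₂) = ABC if i = 2 — equals the quadrant (1, 2, 3, or 4) of the bounding box of {p₀,…,p_{i-2}} in which the pin p_i lies. -/

import Mathlib

namespace PinWords

inductive Letter | N1 | N2 | N3 | N4 | U | D | L | R
  deriving DecidableEq

open Letter

def isNumeral : Letter → Prop
  | N1 | N2 | N3 | N4 => True
  | _ => False

def isDir : Letter → Prop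
  | U | D | L | R => True
  | _ => False

def isVert : Letter → Prop
  | U | D => True
  | _ => False

def isHoriz : Letter → Prop
  | L | R => True
  | _ => False

/-- Consecutive letters alternate between the horizontal class {L,R}
and the vertical class {U,D}. -/
def Alternating : List Letter → Prop
  | a :: b :: rest => ((isHoriz a ∧ isVert b) ∨ (isVert a ∧ isHoriz b)) ∧ Alternating (b :: rest)
  | _ => True

/-- A strict pin word: a numeral followed by a nonempty alternating sequence of directions. -/
def StrictPinWord : List Letter → Prop
  | c :: rest => isNumeral c ∧ rest ≠ [] ∧ (∀ x ∈ rest, isDir x) ∧ Alternating rest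
  | [] => False

/-- A quasi-strict pin word: two numerals followed by alternating directions. -/
def QuasiStrictPinWord : List Letter → Prop
  | c :: d :: rest => isNumeral c ∧ isNumeral d ∧ (∀ x ∈ rest, isDir x) ∧ Alternating rest
  | _ => False

/-- The set M : alternating direction words of length at least 3. -/
def InM (w : List Letter) : Prop :=
  3 ≤ w.length ∧ (∀ c ∈ w, isDir c) ∧ Alternating w

/-- The table defining φ on the first two letters. -/
def varphi : Letter → Letter → List Letter
  | N1, R => [R, U, R] | N2, R => [L, U, R] | N3, R => [L, D, R] | N4, R => [R, D, R]
  | N1, L => [R, U, L] | N2, L => [L, U, L] | N3, L => [L, D, L] | N4, L => [R, D, L]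
  | N1, U => [U, R, U] | N2, U => [U, L, U] | N3, U => [D, L, U] | N4, U => [D, R, U]
  | N1, D => [U, R, D] | N2, D => [U, L, D] | N3, D => [D, L, D] | N4, D => [D, R, D]
  | a, b => [a, b]

/-- The map φ : replace the first two letters according to the table, keep the rest. -/
def phi : List Letter → List Letter
  | a :: b :: rest => varphi a b ++ rest
  | w => w

/-- φ⁻¹ on two-letter direction words, giving a numeral. -/
def phiInv2 : Letter → Letter → Letter
  | R, U => N1 | U, R => N1
  | L, U => N2 | U, L => N2
  | L, D => N3 | D, L => N3
  | R, D => N4 | D, R => N4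
  | _, _ => N1

/-- The quadrant function q on pairs of consecutive letters of a pin word. -/
def qfun (a b : Letter) : Letter :=
  match a with
  | N1 | N2 | N3 | N4 =>
    match varphi a b with
    | [_, x, y] => phiInv2 x y
    | _ => N1
  | _ => phiInv2 a b

/-- A strong numeral-led factor: a numeral followed by directions. -/
def IsSNLF : List Letter → Prop
  | c :: rest => isNumeral c ∧ ∀ x ∈ rest, isDir x
  | [] => False

/-- The order ≼ on pin words of Brignall, Ruškuc and Vatter, via strong
numeral-led factor decompositions.  Each element of `t` is a triple
`(uᵢ, vᵢ, wᵢ)`. -/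
def PinOrder (u w : List Letter) : Prop :=
  ∃ (t : List (List Letter × List Letter × List Letter)) (vfin : List Letter),
    u = (t.map fun x => x.1).flatten ∧
    w = (t.map fun x => x.2.1 ++ x.2.2).flatten ++ vfin ∧
    ∀ x ∈ t, IsSNLF x.1 ∧
      ((∃ c rest, x.2.2 = c :: rest ∧ isNumeral c ∧ x.2.2 = x.1) ∨
       (∃ c rest l uc, x.2.2 = c :: rest ∧ isDir c ∧ x.2.1.getLast? = some l ∧
          x.1 = uc :: rest ∧ qfun l c = uc))

/-! ### Pin sequences in the plane -/

abbrev Pt := ℤ × ℤ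

def SepVert (c : Pt) (P Q : Set Pt) : Prop :=
  ((∀ a ∈ P, a.1 < c.1) ∧ (∀ b ∈ Q, c.1 < b.1)) ∨
  ((∀ a ∈ P, c.1 < a.1) ∧ (∀ b ∈ Q, b.1 < c.1))

def SepHoriz (c : Pt) (P Q : Set Pt) : Prop :=
  ((∀ a ∈ P, a.2 < c.2) ∧ (∀ b ∈ Q, c.2 < b.2)) ∨
  ((∀ a ∈ P, c.2 < a.2) ∧ (∀ b ∈ Q, b.2 < c.2))

/-- A horizontal or vertical line through `c` separates `P` from `Q`. -/
def Separates (c : Pt) (P Q : Set Pt) : Prop := SepVert c P Q ∨ SepHoriz c P Q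

/-- `c` does not separate `S` into two nonempty parts. -/
def Independent (c : Pt) (S : Set Pt) : Prop :=
  ¬((∃ a ∈ S, a.1 < c.1) ∧ (∃ a ∈ S, c.1 < a.1)) ∧
  ¬((∃ a ∈ S, a.2 < c.2) ∧ (∃ a ∈ S, c.2 < a.2))

/-- `c` lies in the bounding box of `S`. -/
def InBox (S : Set Pt) (c : Pt) : Prop :=
  (∃ a ∈ S, a.1 ≤ c.1) ∧ (∃ a ∈ S, c.1 ≤ a.1) ∧ (∃ a ∈ S, a.2 ≤ c.2) ∧ (∃ a ∈ S, c.2 ≤ a.2)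

def DistinctCoords {n : ℕ} (p : Fin n → Pt) : Prop :=
  ∀ i j, i ≠ j → (p i).1 ≠ (p j).1 ∧ (p i).2 ≠ (p j).2

/-- The set of points `p j` for `j < i`. -/
def prevSet {n : ℕ} (p : Fin n → Pt) (i : ℕ) : Set Pt := {x | ∃ j : Fin n, j.val < i ∧ x = p j}

/-- A pin sequence (0-indexed): each pin lies outside the bounding box of the
previous ones and either separates the previous pin from the earlier ones, or
is independent. -/
def IsPinSeq {n : ℕ} (p : Fin n → Pt) : Prop :=
  DistinctCoords p ∧
  ∀ i : Fin n, 1 ≤ i.val →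
    ¬ InBox (prevSet p i.val) (p i) ∧
    (Separates (p i) {x | ∃ j : Fin n, j.val + 1 = i.val ∧ x = p j} (prevSet p (i.val - 1)) ∨
     Independent (p i) (prevSet p i.val))

/-- A proper pin sequence: from the third pin on, each pin separates the
previous pin from the earlier ones. -/
def IsProperPinSeq {n : ℕ} (p : Fin n → Pt) : Prop :=
  IsPinSeq p ∧
  ∀ i : Fin n, 2 ≤ i.val →
    Separates (p i) {x | ∃ j : Fin n, j.val + 1 = i.val ∧ x = p j} (prevSet p (i.val - 1))

/-- The sequence of points `p` is order isomorphic to the diagram of `σ`. -/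
def RepresentsPerm {k m : ℕ} (p : Fin k → Pt) (σ : Equiv.Perm (Fin m)) : Prop :=
  ∃ e : Fin k ≃ Fin m, ∀ i j : Fin k,
    ((p i).1 < (p j).1 ↔ e i < e j) ∧ ((p i).2 < (p j).2 ↔ σ (e i) < σ (e j))

def IsIntervalSet {n : ℕ} (S : Set (Fin n)) : Prop :=
  ∀ a ∈ S, ∀ b ∈ S, ∀ c, a ≤ c → c ≤ b → c ∈ S

/-- A simple permutation: no nontrivial block. -/
def IsSimplePerm {n : ℕ} (σ : Equiv.Perm (Fin n)) : Prop :=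
  ∀ S : Set (Fin n), IsIntervalSet S → IsIntervalSet (σ '' S) → S.ncard ≤ 1 ∨ S = Set.univ

/-- Pattern containment of permutations. -/
def IsPattern {k n : ℕ} (π : Equiv.Perm (Fin k)) (σ : Equiv.Perm (Fin n)) : Prop :=
  ∃ f : Fin k → Fin n, StrictMono f ∧ ∀ i j : Fin k, π i < π j ↔ σ (f i) < σ (f j)

/-- The meaning of a letter of a pin word: `prev` is the set of all earlier
points (including the origin), `prevPin` is the previous pin, `older` is
`prev` minus the previous pin. -/
def LetterEncodes (c : Letter) (pt : Pt) (prev prevPin older : Set Pt) : Prop :=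
  match c with
  | U => (∀ a ∈ prev, a.2 < pt.2) ∧ SepVert pt prevPin older
  | D => (∀ a ∈ prev, pt.2 < a.2) ∧ SepVert pt prevPin older
  | L => (∀ a ∈ prev, pt.1 < a.1) ∧ SepHoriz pt prevPin older
  | R => (∀ a ∈ prev, a.1 < pt.1) ∧ SepHoriz pt prevPin older
  | N1 => Independent pt prev ∧ ∀ a ∈ prev, a.1 < pt.1 ∧ a.2 < pt.2
  | N2 => Independent pt prev ∧ ∀ a ∈ prev, pt.1 < a.1 ∧ a.2 < pt.2
  | N3 => Independent pt prev ∧ ∀ a ∈ prev, pt.1 < a.1 ∧ pt.2 < a.2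
  | N4 => Independent pt prev ∧ ∀ a ∈ prev, a.1 < pt.1 ∧ pt.2 < a.2

/-- The word `w` encodes the extended pin sequence `p₀, p₁, …, p_n`
(the origin is `p 0`). -/
def Encodes (w : List Letter) (p : Fin (w.length + 1) → Pt) : Prop :=
  DistinctCoords p ∧
  ∀ k : Fin w.length,
    LetterEncodes (w.get k) (p k.succ)
      (prevSet p (k.val + 1))
      {x | ∃ j : Fin (w.length + 1), j.val = k.val ∧ x = p j}
      (prevSet p k.val)

/-- The pin word `w` corresponds to the permutation `σ`. -/
def WordRepresents (w : List Letter) {m : ℕ} (σ : Equiv.Perm (Fin m)) : Prop :=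
  ∃ p : Fin (w.length + 1) → Pt, Encodes w p ∧
    RepresentsPerm (fun i : Fin w.length => p i.succ) σ

/-- A proper pin-permutation: one admitting a proper pin representation. -/
def ProperPinPerm {n : ℕ} (σ : Equiv.Perm (Fin n)) : Prop :=
  ∃ p : Fin n → Pt, IsProperPinSeq p ∧ RepresentsPerm p σ

/-- `pt` lies in the quadrant named by the numeral `c` of the bounding box of `S`. -/
def InQuadrant (c : Letter) (pt : Pt) (S : Set Pt) : Prop :=
  match c with
  | N1 => ∀ a ∈ S, a.1 < pt.1 ∧ a.2 < pt.2
  | N2 => ∀ a ∈ S, pt.1 < a.1 ∧ a.2 < pt.2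
  | N3 => ∀ a ∈ S, pt.1 < a.1 ∧ pt.2 < a.2
  | N4 => ∀ a ∈ S, a.1 < pt.1 ∧ pt.2 < a.2
  | _ => False

/-- Two points are in knight position. -/
def Knight (a b : Pt) : Prop :=
  (|a.1 - b.1| = 1 ∧ |a.2 - b.2| = 2) ∨ (|a.1 - b.1| = 2 ∧ |a.2 - b.2| = 1)

/-- The set E(π) of forbidden factors associated to a simple permutation π. -/
def Epi {m : ℕ} (π : Equiv.Perm (Fin m)) : Set (List Letter) :=
  {v | ∃ u, StrictPinWord u ∧ WordRepresents u π ∧ v = phi u} ∪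
  {v | ∃ u x, QuasiStrictPinWord u ∧ WordRepresents u π ∧
      x.length = 2 ∧ (∀ c ∈ x, isDir c) ∧ v = x ++ phi u.tail ∧ Alternating v}

/-! Let `a` and `b` be the letters of the pins `p_{i-1}` and `p_i`. If `a` is a direction,
`p_{i-1}` lies beyond the bounding box of the earlier points on side `a`; if `a` is a numeral,
it lies in quadrant `a`, hence beyond the box on the side `x` perpendicular to `b`, where `x` is
the middle letter of `φ(ab)`. The pin `p_i` lies beyond all earlier points on side `b`, and the
line through it perpendicular to `b` separates `p_{i-1}` from the earlier points, so `p_i` is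
beyond the box on side `x` (resp. `a`) as well. These two sides determine the quadrant `φ⁻¹(xb)`
(resp. `φ⁻¹(ab)`). -/

def Perp (a b : Letter) : Prop := isHoriz a ∧ isVert b ∨ isVert a ∧ isHoriz b

def Beyond : Letter → Pt → Set Pt → Prop
  | U, pt, S => ∀ s ∈ S, s.2 < pt.2
  | D, pt, S => ∀ s ∈ S, pt.2 < s.2
  | L, pt, S => ∀ s ∈ S, pt.1 < s.1
  | R, pt, S => ∀ s ∈ S, s.1 < pt.1
  | _, _, _ => False

section Letters

variable {a b x : Letter} {q pt : Pt} {S T P O prev : Set Pt}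

lemma Perp.isDir_left (h : Perp a b) : isDir a := by
  cases a <;> simp_all [Perp, isHoriz, isVert, isDir]

lemma Perp.isDir_right (h : Perp a b) : isDir b := by
  cases b <;> simp_all [Perp, isHoriz, isVert, isDir]

lemma Beyond.mono (h : Beyond x pt T) (hST : S ⊆ T) : Beyond x pt S := by
  cases x <;> first | exact h.elim | exact fun s hs => h s (hST hs)

lemma beyond_of_letterEncodes (hx : isDir x) (h : LetterEncodes x pt S P O) : Beyond x pt S := by
  cases x <;> first | exact hx.elim | exact h.1

lemma inQuadrant_of_letterEncodes (hx : isNumeral x) (h : LetterEncodes x pt S P O) :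
    InQuadrant x pt S := by
  cases x <;> first | exact hx.elim | exact h.2

lemma qfun_of_isDir (ha : isDir a) : qfun a b = phiInv2 a b := by
  cases a <;> first | exact ha.elim | rfl

lemma exists_perp_side_of_isNumeral (ha : isNumeral a) (hb : isDir b) :
    ∃ x, Perp x b ∧ qfun a b = phiInv2 x b ∧ ∀ q S, InQuadrant a q S → Beyond x q S := by
  refine ⟨(varphi a b).getD 1 a, ?_, ?_, fun q S h => ?_⟩ <;>
    cases a <;> cases b <;> first
    | exact ha.elim
    | exact hb.elim
    | rfl
    | exact fun s hs => (h s hs).1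
    | exact fun s hs => (h s hs).2
    | simp [Perp, isHoriz, isVert, varphi]

lemma inQuadrant_phiInv2 (hxy : Perp x b) (hx : Beyond x pt S) (hb : Beyond b pt S) :
    InQuadrant (phiInv2 x b) pt S := by
  cases x <;> cases b <;> first
    | exact fun s hs => ⟨hx s hs, hb s hs⟩
    | exact fun s hs => ⟨hb s hs, hx s hs⟩
    | simp [Perp, isHoriz, isVert] at hxy

lemma SepVert.beyond (h : SepVert pt P S) (hx : isHoriz x) (hq : q ∈ P) (hS : S.Nonempty)
    (hqx : Beyond x q S) : Beyond x pt S := by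
  obtain ⟨s₀, hs₀⟩ := hS
  cases x <;> simp only [isHoriz] at hx <;> rcases h with ⟨hP, hS⟩ | ⟨hP, hS⟩ <;> intro s hs <;>
    linarith [hP q hq, hS s hs, hS s₀ hs₀, hqx s hs, hqx s₀ hs₀]

lemma SepHoriz.beyond (h : SepHoriz pt P S) (hx : isVert x) (hq : q ∈ P) (hS : S.Nonempty)
    (hqx : Beyond x q S) : Beyond x pt S := by
  obtain ⟨s₀, hs₀⟩ := hS
  cases x <;> simp only [isVert] at hx <;> rcases h with ⟨hP, hS⟩ | ⟨hP, hS⟩ <;> intro s hs <;>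
    linarith [hP q hq, hS s hs, hS s₀ hs₀, hqx s hs, hqx s₀ hs₀]

lemma beyond_of_perp_letterEncodes (hxb : Perp x b) (hq : q ∈ P) (hS : S.Nonempty)
    (hqx : Beyond x q S) (h : LetterEncodes b pt prev P S) : Beyond x pt S := by
  cases b <;> simp only [Perp, isHoriz, isVert, and_false, and_true, or_false,
    false_or] at hxb
  all_goals first
    | exact SepVert.beyond h.2 hxb hq hS hqx
    | exact SepHoriz.beyond h.2 hxb hq hS hqx

lemma inQuadrant_qfun {P' : Set Pt} (hab : isNumeral a ∧ isDir b ∨ Perp a b)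
    (ha : LetterEncodes a q S P' O) (hb : LetterEncodes b pt prev P S)
    (hS : S.Nonempty) (hq : q ∈ P) (hSprev : S ⊆ prev) :
    InQuadrant (qfun a b) pt S := by
  obtain ⟨x, hxb, hqfun, hqx⟩ : ∃ x, Perp x b ∧ qfun a b = phiInv2 x b ∧ Beyond x q S := by
    rcases hab with ⟨ha', hb'⟩ | hab
    · obtain ⟨x, hxb, hqfun, hside⟩ := exists_perp_side_of_isNumeral ha' hb'
      exact ⟨x, hxb, hqfun, hside q S (inQuadrant_of_letterEncodes ha' ha)⟩
    · exact ⟨a, hab, qfun_of_isDir hab.isDir_left, beyond_of_letterEncodes hab.isDir_left ha⟩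
  rw [hqfun]
  exact inQuadrant_phiInv2 hxb (beyond_of_perp_letterEncodes hxb hq hS hqx hb)
    ((beyond_of_letterEncodes hxb.isDir_right hb).mono hSprev)

end Letters

lemma Alternating.perp_getElem : ∀ {l : List Letter}, Alternating l → ∀ {i : ℕ}
    (hi : i + 1 < l.length), Perp l[i] l[i + 1]
  | _ :: _ :: _, h, 0, _ => h.1
  | _ :: b :: l, h, i + 1, hi => perp_getElem (l := b :: l) h.2 (by simpa using hi)

lemma StrictPinWord.isNumeral_isDir_or_perp {w : List Letter} (hw : StrictPinWord w) {i : ℕ}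
    (hi : i + 1 < w.length) : isNumeral w[i] ∧ isDir w[i + 1] ∨ Perp w[i] w[i + 1] := by
  obtain _ | ⟨c, rest⟩ := w
  · exact hw.elim
  obtain ⟨hc, -, hdir, halt⟩ := hw
  cases i with
  | zero => exact Or.inl ⟨hc, hdir _ (List.getElem_mem _)⟩
  | succ i => exact Or.inr (halt.perp_getElem _)

lemma prevSet_mono {n : ℕ} (p : Fin n → Pt) {i i' : ℕ} (h : i ≤ i') : prevSet p i ⊆ prevSet p i' :=
  fun _ ⟨j, hj, hx⟩ => ⟨j, hj.trans_le h, hx⟩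

/-- for a strict pin word w encoding the extended pin sequence
(p₀,…,p_n), the numeral q(w_{i-1}, w_i) gives the quadrant of the bounding box
of {p₀,…,p_{i-2}} in which the pin p_i lies. -/
theorem q_gives_quadrant (w : List Letter) (hw : StrictPinWord w)
    (p : Fin (w.length + 1) → Pt) (henc : Encodes w p) :
    ∀ j k : Fin w.length, j.val + 1 = k.val →
      InQuadrant (qfun (w.get j) (w.get k)) (p k.succ) (prevSet p k.val) := by
  rintro ⟨j, hj⟩ ⟨k, hk⟩ hjk
  obtain rfl : k = j + 1 := hjk.symm
  have hS : (prevSet p (j + 1)).Nonempty := ⟨p 0, 0, j.succ_pos, rfl⟩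
  exact inQuadrant_qfun (hw.isNumeral_isDir_or_perp hk) (henc.2 ⟨j, hj⟩) (henc.2 ⟨j + 1, hk⟩)
    hS ⟨Fin.succ ⟨j, hj⟩, rfl, rfl⟩ (prevSet_mono p (j + 1).le_succ)

end PinWords
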